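/- arXiv:0810.4567 — 2 statements merged into one kernel-verified Lean document; each statement's English description precedes it below -/
import Mathlib

section
/- Let Λ be a finitely-aligned k-graph, x ∈ ∂Λ a boundary path, and λ ≠ μ ∈ Λx(0) with λx = μx. Then d(λ) ≠ d(μ), and for every coordinate i with d(λ)_i ≠ d(μ)_i one has d(x)_i = ∞; consequently, setting p = d(λ) ∨ d(μ), the shifts σ^{p−d(μ)}x and σ^{p−d(λ)}x are defined and equal, with p − d(μ) ≠ p − d(λ). -/
/-- A `k`-graph: a countable small category `Λ` with a degree functor
`d : Λ → ℕ^k` satisfying the unique factorization property. -/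
structure KGraph (k : ℕ) where
  Obj : Type
  Mor : Type
  obj_countable : Countable Obj
  mor_countable : Countable Mor
  r : Mor → Obj
  s : Mor → Obj
  ide : Obj → Mor
  comp : Mor → Mor → Mor
  r_ide : ∀ v, r (ide v) = v
  s_ide : ∀ v, s (ide v) = v
  r_comp : ∀ μ ν, s μ = r ν → r (comp μ ν) = r μ
  s_comp : ∀ μ ν, s μ = r ν → s (comp μ ν) = s ν
  ide_comp : ∀ μ, comp (ide (r μ)) μ = μ
  comp_ide : ∀ μ, comp μ (ide (s μ)) = μ
  comp_assoc : ∀ μ ν ρ, s μ = r ν → s ν = r ρ →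
    comp (comp μ ν) ρ = comp μ (comp ν ρ)
  d : Mor → Fin k → ℕ
  d_ide : ∀ v, d (ide v) = 0
  d_comp : ∀ μ ν, s μ = r ν → d (comp μ ν) = d μ + d ν
  factor : ∀ (lam : Mor) (m n : Fin k → ℕ), d lam = m + n →
    ∃! p : Mor × Mor, s p.1 = r p.2 ∧ comp p.1 p.2 = lam ∧ d p.1 = m ∧ d p.2 = n

namespace KGraph

variable {k : ℕ} {Λ : KGraph k}

/-- The set `Λ^min(λ,μ)` of minimal common extensions of `λ` and `μ`. -/
def MinExt (Λ : KGraph k) (lam mu : Λ.Mor) : Set (Λ.Mor × Λ.Mor) :=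
  {p | Λ.s lam = Λ.r p.1 ∧ Λ.s mu = Λ.r p.2 ∧
    Λ.comp lam p.1 = Λ.comp mu p.2 ∧
    Λ.d (Λ.comp lam p.1) = Λ.d lam ⊔ Λ.d mu}

/-- `Λ` is finitely aligned if all `Λ^min(λ,μ)` are finite. -/
def FinitelyAligned (Λ : KGraph k) : Prop :=
  ∀ lam mu : Λ.Mor, (Λ.MinExt lam mu).Finite

/-- `E ⊆ vΛ` is exhaustive. -/
def Exhaustive (Λ : KGraph k) (v : Λ.Obj) (E : Set Λ.Mor) : Prop :=
  (∀ lam ∈ E, Λ.r lam = v) ∧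
  ∀ mu : Λ.Mor, Λ.r mu = v → ∃ lam ∈ E, (Λ.MinExt lam mu).Nonempty

/-- `Ext(η; F)`. -/
def ExtSet (Λ : KGraph k) (η : Λ.Mor) (F : Set Λ.Mor) : Set Λ.Mor :=
  ⋃ lam ∈ F, {α | ∃ β, (α, β) ∈ Λ.MinExt η lam}

/-- `Λ` has no sources: `vΛ^{e_i} ≠ ∅` for all `v`, `i`. -/
def NoSources (Λ : KGraph k) : Prop :=
  ∀ (v : Λ.Obj) (i : Fin k), ∃ lam : Λ.Mor, Λ.r lam = v ∧ Λ.d lam = Pi.single i 1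

end KGraph

/-- A path in `Λ`, i.e. a degree-preserving functor `x : Ω_{k,m} → Λ`
where `m = deg x ∈ (ℕ ∪ {∞})^k`.  `vert p = x(p)` and `seg p q = x(p,q)`
for `p ≤ q ≤ deg x` (values outside that range are irrelevant junk). -/
structure KPath {k : ℕ} (Λ : KGraph k) where
  deg : Fin k → ℕ∞
  vert : (Fin k → ℕ) → Λ.Obj
  seg : (Fin k → ℕ) → (Fin k → ℕ) → Λ.Mor
  r_seg : ∀ p q, p ≤ q → (∀ i, (q i : ℕ∞) ≤ deg i) → Λ.r (seg p q) = vert p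
  s_seg : ∀ p q, p ≤ q → (∀ i, (q i : ℕ∞) ≤ deg i) → Λ.s (seg p q) = vert q
  d_seg : ∀ p q, p ≤ q → (∀ i, (q i : ℕ∞) ≤ deg i) → Λ.d (seg p q) = q - p
  comp_seg : ∀ p q r, p ≤ q → q ≤ r → (∀ i, (r i : ℕ∞) ≤ deg i) →
    Λ.comp (seg p q) (seg q r) = seg p r

namespace KPath

variable {k : ℕ} {Λ : KGraph k}

/-- `n ≤ d(x)`. -/
def DegLe (x : KPath Λ) (n : Fin k → ℕ) : Prop :=
  ∀ i, (n i : ℕ∞) ≤ x.deg i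

private lemma enat_aux {n q : ℕ} {D : ℕ∞} (h1 : (n : ℕ∞) ≤ D)
    (h2 : (q : ℕ∞) ≤ D - n) : ((n + q : ℕ) : ℕ∞) ≤ D := by
  induction D using ENat.recTopCoe with
  | top => exact le_top
  | coe dd =>
    rw [← ENat.coe_sub] at h2
    have h1' : n ≤ dd := by exact_mod_cast h1
    have h2' : q ≤ dd - n := by exact_mod_cast h2
    exact_mod_cast (by omega : n + q ≤ dd)

/-- The shift `σⁿ x`, defined when `n ≤ d(x)`. -/
def shift (x : KPath Λ) (n : Fin k → ℕ) (h : x.DegLe n) : KPath Λ where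
  deg i := x.deg i - n i
  vert p := x.vert (n + p)
  seg p q := x.seg (n + p) (n + q)
  r_seg p q hpq hq :=
    x.r_seg _ _ (add_le_add (le_refl n) hpq) (fun i => enat_aux (h i) (hq i))
  s_seg p q hpq hq :=
    x.s_seg _ _ (add_le_add (le_refl n) hpq) (fun i => enat_aux (h i) (hq i))
  d_seg p q hpq hq := by
    rw [x.d_seg _ _ (add_le_add (le_refl n) hpq) (fun i => enat_aux (h i) (hq i))]
    funext i
    simp only [Pi.sub_apply, Pi.add_apply]
    omega
  comp_seg p q r hpq hqr hr :=
    x.comp_seg _ _ _ (add_le_add (le_refl n) hpq) (add_le_add (le_refl n) hqr)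
      (fun i => enat_aux (h i) (hr i))

/-- `σᵐ x = σⁿ x` (in particular both shifts are defined). -/
def ShiftsEq (x : KPath Λ) (m n : Fin k → ℕ) : Prop :=
  ∃ (hm : x.DegLe m) (hn : x.DegLe n), x.shift m hm = x.shift n hn

/-- `x` is a boundary path: for all `n ≤ d(x)` and every finite exhaustive
`E ⊆ x(n)Λ` there is `λ ∈ E` with `x(n, n + d(λ)) = λ`. -/
def IsBoundary (x : KPath Λ) : Prop :=
  ∀ n : Fin k → ℕ, x.DegLe n →
    ∀ E : Set Λ.Mor, E.Finite → Λ.Exhaustive (x.vert n) E →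
      ∃ lam ∈ E, x.DegLe (n + Λ.d lam) ∧ x.seg n (n + Λ.d lam) = lam

/-- `y = λ x`: `y` is the extension of the path `x` by the morphism `λ`. -/
structure IsExtension (lam : Λ.Mor) (x y : KPath Λ) : Prop where
  deg_eq : y.deg = fun i => (Λ.d lam i : ℕ∞) + x.deg i
  seg_eq : y.seg 0 (Λ.d lam) = lam
  shift_eq : ∀ h : y.DegLe (Λ.d lam), y.shift (Λ.d lam) h = x

end KPath

namespace KGraph

variable {k : ℕ}

/-- `Λ` has no local periodicity (NLP). -/
def NLP (Λ : KGraph k) : Prop :=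
  ∀ (v : Λ.Obj) (m n : Fin k → ℕ), m ≠ n →
    ∃ x : KPath Λ, x.IsBoundary ∧ x.vert 0 = v ∧
      (¬ x.DegLe (m ⊔ n) ∨ ¬ x.ShiftsEq m n)

/-- `Λ` has strong no local periodicity (SNLP). -/
def SNLP (Λ : KGraph k) : Prop :=
  ∀ (v : Λ.Obj) (m n : Fin k → ℕ), m ≠ n →
    ∃ x : KPath Λ, x.IsBoundary ∧ x.vert 0 = v ∧
      x.DegLe (m ⊔ n) ∧ ¬ x.ShiftsEq m n

/-- `Λ` satisfies the aperiodicity condition at `v`. -/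
def AperiodicAt (Λ : KGraph k) (v : Λ.Obj) : Prop :=
  ∃ x : KPath Λ, x.IsBoundary ∧ x.vert 0 = v ∧
    ∀ (m n : Fin k → ℕ) (hm : x.DegLe m) (hn : x.DegLe n),
      x.shift m hm = x.shift n hn → m = n

/-- `Λ` satisfies the aperiodicity condition. -/
def Aperiodic (Λ : KGraph k) : Prop := ∀ v : Λ.Obj, Λ.AperiodicAt v

/-- `Λ` has local periodicity `n, m` at `v`. -/
def LocalPeriodicity (Λ : KGraph k) (v : Λ.Obj) (n m : Fin k → ℕ) : Prop :=
  ∀ x : KPath Λ, x.IsBoundary → x.vert 0 = v →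
    x.DegLe (m ⊔ n) ∧ x.ShiftsEq n m

/-- Condition B of Farthing–Muhly–Yeend. -/
def ConditionB (Λ : KGraph k) : Prop :=
  ∀ v : Λ.Obj, ∃ x : KPath Λ, x.IsBoundary ∧ x.vert 0 = v ∧
    ∀ (lam mu : Λ.Mor) (y₁ y₂ : KPath Λ), Λ.s lam = v → Λ.s mu = v → lam ≠ mu →
      KPath.IsExtension lam x y₁ → KPath.IsExtension mu x y₂ → y₁ ≠ y₂

/-- `H ⊆ Λ⁰` is hereditary. -/
def Hereditary (Λ : KGraph k) (H : Set Λ.Obj) : Prop :=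
  ∀ lam : Λ.Mor, Λ.r lam ∈ H → Λ.s lam ∈ H

/-- `H ⊆ Λ⁰` is saturated. -/
def Saturated (Λ : KGraph k) (H : Set Λ.Obj) : Prop :=
  ∀ (v : Λ.Obj) (F : Set Λ.Mor), F.Finite → Λ.Exhaustive v F →
    (∀ lam ∈ F, Λ.s lam ∈ H) → v ∈ H

/-- `Λ` is cofinal. -/
def Cofinal (Λ : KGraph k) : Prop :=
  ∀ v : Λ.Obj, ∃ (x : KPath Λ) (n : Fin k → ℕ), x.IsBoundary ∧ x.DegLe n ∧
    ∃ lam : Λ.Mor, Λ.r lam = v ∧ Λ.s lam = x.vert n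

end KGraph

/-!
Comparing the two factorisations `y = λx = μx`: the initial segments of `y` of degrees `d(λ)`
and `d(μ)` are `λ` and `μ`, so `λ ≠ μ` forces `d(λ) ≠ d(μ)`; the degrees `d(λ) + d(x)` and
`d(μ) + d(x)` of `y` agree, so `d(x)ᵢ = ∞` wherever `d(λ)ᵢ ≠ d(μ)ᵢ`. With `p = d(λ) ∨ d(μ)`,
both `σ^{p - d(μ)} x` and `σ^{p - d(λ)} x` are then `σᵖ y`.
-/

lemma sup_tsub_right_ne_sup_tsub_left {ι : Type*} {a b : ι → ℕ} (h : a ≠ b) :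
    a ⊔ b - b ≠ a ⊔ b - a := by
  obtain ⟨i, hi⟩ := Function.ne_iff.mp h
  intro heq
  have := congrFun heq i
  simp only [Pi.sub_apply, Pi.sup_apply] at this
  omega

namespace KPath

variable {k : ℕ} {Λ : KGraph k}

theorem ext {x y : KPath Λ} (hdeg : x.deg = y.deg) (hvert : x.vert = y.vert)
    (hseg : x.seg = y.seg) : x = y := by
  cases x; cases y
  subst hdeg hvert hseg
  rfl

theorem DegLe.add {x : KPath Λ} {m n : Fin k → ℕ} (hm : x.DegLe m)
    (hn : (x.shift m hm).DegLe n) : x.DegLe (m + n) := fun i => by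
  simpa only [Pi.add_apply, Nat.cast_add] using add_le_of_le_tsub_left_of_le (hm i) (hn i)

theorem DegLe.of_deg_eq_top {x : KPath Λ} {m : Fin k → ℕ}
    (h : ∀ i, m i ≠ 0 → x.deg i = ⊤) : x.DegLe m := fun i => by
  by_cases hi : m i = 0
  · simp [hi]
  · simp [h i hi]

theorem shift_congr (x : KPath Λ) {m n : Fin k → ℕ} (h : m = n) (hm : x.DegLe m)
    (hn : x.DegLe n) : x.shift m hm = x.shift n hn := by
  subst h
  rfl

theorem shift_shift (x : KPath Λ) {m n : Fin k → ℕ} (hm : x.DegLe m)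
    (hn : (x.shift m hm).DegLe n) :
    (x.shift m hm).shift n hn = x.shift (m + n) (hm.add hn) := by
  apply ext
  · funext i
    show x.deg i - m i - n i = x.deg i - ((m + n) i : ℕ)
    rw [tsub_tsub, Pi.add_apply, Nat.cast_add]
  · funext q
    exact congrArg x.vert (add_assoc m n q).symm
  · funext q r
    exact congrArg₂ x.seg (add_assoc m n q).symm (add_assoc m n r).symm

namespace IsExtension

variable {lam mu : Λ.Mor} {x y : KPath Λ}

theorem degLe_add (h : IsExtension lam x y) {q : Fin k → ℕ} (hq : x.DegLe q) :
    y.DegLe (Λ.d lam + q) := fun i => by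
  rw [h.deg_eq, Pi.add_apply, Nat.cast_add]
  exact add_le_add_right (hq i) _

theorem degLe (h : IsExtension lam x y) : y.DegLe (Λ.d lam) := by
  simpa using h.degLe_add (q := 0) (fun i => by simp)

theorem shift_eq_shift_add (h : IsExtension lam x y) {q : Fin k → ℕ} (hq : x.DegLe q) :
    x.shift q hq = y.shift (Λ.d lam + q) (h.degLe_add hq) := by
  -- `x` cannot be substituted away directly: `h` depends on it.
  have hshift : ∀ z, y.shift (Λ.d lam) h.degLe = z → ∀ hz : z.DegLe q,
      z.shift q hz = y.shift (Λ.d lam + q) (h.degLe_add hq) := by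
    rintro _ rfl hz
    exact y.shift_shift h.degLe hz
  exact hshift x (h.shift_eq h.degLe) hq

theorem eq_of_d_eq (h₁ : IsExtension lam x y) (h₂ : IsExtension mu x y)
    (hd : Λ.d lam = Λ.d mu) : lam = mu := by
  rw [← h₁.seg_eq, ← h₂.seg_eq, hd]

theorem deg_eq_top_of_d_ne (h₁ : IsExtension lam x y) (h₂ : IsExtension mu x y)
    {i : Fin k} (hi : Λ.d lam i ≠ Λ.d mu i) : x.deg i = ⊤ := by
  by_contra hfin
  have hsum : (Λ.d lam i : ℕ∞) + x.deg i = Λ.d mu i + x.deg i :=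
    congrFun (h₁.deg_eq.symm.trans h₂.deg_eq) i
  exact hi (ENat.natCast_inj.mp (WithTop.add_right_cancel hfin hsum))

theorem degLe_sup_tsub (h₁ : IsExtension lam x y) (h₂ : IsExtension mu x y) :
    x.DegLe (Λ.d lam ⊔ Λ.d mu - Λ.d mu) :=
  DegLe.of_deg_eq_top fun i hi => h₁.deg_eq_top_of_d_ne h₂ fun hd => hi (by simp [hd])

end IsExtension

end KPath

theorem stmt17_general {k : ℕ} (Λ : KGraph k)
    (x : KPath Λ) (lam mu : Λ.Mor) (hne : lam ≠ mu)
    (y : KPath Λ) (h₁ : KPath.IsExtension lam x y)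
    (h₂ : KPath.IsExtension mu x y) :
    Λ.d lam ≠ Λ.d mu ∧
    (∀ i : Fin k, Λ.d lam i ≠ Λ.d mu i → x.deg i = ⊤) ∧
    x.ShiftsEq (Λ.d lam ⊔ Λ.d mu - Λ.d mu) (Λ.d lam ⊔ Λ.d mu - Λ.d lam) ∧
    Λ.d lam ⊔ Λ.d mu - Λ.d mu ≠ Λ.d lam ⊔ Λ.d mu - Λ.d lam := by
  have hd : Λ.d lam ≠ Λ.d mu := fun hd => hne (h₁.eq_of_d_eq h₂ hd)
  have hxm := h₁.degLe_sup_tsub h₂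
  have hxl : x.DegLe (Λ.d lam ⊔ Λ.d mu - Λ.d lam) := by
    simpa only [sup_comm] using h₂.degLe_sup_tsub h₁
  refine ⟨hd, fun i => h₁.deg_eq_top_of_d_ne h₂, ⟨hxm, hxl, ?_⟩,
    sup_tsub_right_ne_sup_tsub_left hd⟩
  rw [h₂.shift_eq_shift_add hxm, h₁.shift_eq_shift_add hxl]
  exact y.shift_congr ((add_tsub_cancel_of_le le_sup_right).trans
    (add_tsub_cancel_of_le le_sup_left).symm) _ _

theorem stmt17 {k : ℕ} (Λ : KGraph k) (hFA : Λ.FinitelyAligned)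
    (x : KPath Λ) (hx : x.IsBoundary) (lam mu : Λ.Mor)
    (hlam : Λ.s lam = x.vert 0) (hmu : Λ.s mu = x.vert 0) (hne : lam ≠ mu)
    (y : KPath Λ) (h₁ : KPath.IsExtension lam x y)
    (h₂ : KPath.IsExtension mu x y) :
    Λ.d lam ≠ Λ.d mu ∧
    (∀ i : Fin k, Λ.d lam i ≠ Λ.d mu i → x.deg i = ⊤) ∧
    x.ShiftsEq (Λ.d lam ⊔ Λ.d mu - Λ.d mu) (Λ.d lam ⊔ Λ.d mu - Λ.d lam) ∧
    Λ.d lam ⊔ Λ.d mu - Λ.d mu ≠ Λ.d lam ⊔ Λ.d mu - Λ.d lam :=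
  stmt17_general Λ x lam mu hne y h₁ h₂
end

section
/- Let Λ be a finitely-aligned k-graph that is not cofinal, witnessed by a vertex v and a boundary path x with vΛx(n) = ∅ for all n ≤ d(x). Then the set H_x = {w ∈ Λ^0 : wΛx(n) = ∅ for all n ≤ d(x)} is a nonempty proper hereditary subset of Λ^0. -/
namespace KPath

variable {k : ℕ} {Λ : KGraph k}

/-- The set `H_x`. -/
def unreachingVertices (x : KPath Λ) : Set Λ.Obj :=
  {w | ∀ n : Fin k → ℕ, x.DegLe n → ∀ lam : Λ.Mor, Λ.r lam = w → Λ.s lam ≠ x.vert n}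

theorem degLe_zero (x : KPath Λ) : x.DegLe 0 := fun _ => by simp

theorem vert_zero_notMem_unreachingVertices (x : KPath Λ) :
    x.vert 0 ∉ x.unreachingVertices := fun h =>
  h 0 x.degLe_zero (Λ.ide (x.vert 0)) (Λ.r_ide _) (Λ.s_ide _)

theorem unreachingVertices_ne_univ (x : KPath Λ) : x.unreachingVertices ≠ Set.univ :=
  fun h => x.vert_zero_notMem_unreachingVertices (h ▸ Set.mem_univ _)

theorem hereditary_unreachingVertices (x : KPath Λ) :
    Λ.Hereditary x.unreachingVertices := by
  intro mu hmu n hn lam hlam hs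
  exact hmu n hn (Λ.comp mu lam) (Λ.r_comp mu lam hlam.symm)
    (by rwa [Λ.s_comp mu lam hlam.symm])

end KPath

theorem stmt19_general {k : ℕ} (Λ : KGraph k)
    (v : Λ.Obj) (x : KPath Λ)
    (hv : ∀ n : Fin k → ℕ, x.DegLe n →
      ∀ lam : Λ.Mor, Λ.r lam = v → Λ.s lam ≠ x.vert n) :
    ({w : Λ.Obj | ∀ n : Fin k → ℕ, x.DegLe n →
        ∀ lam : Λ.Mor, Λ.r lam = w → Λ.s lam ≠ x.vert n}).Nonempty ∧
    ({w : Λ.Obj | ∀ n : Fin k → ℕ, x.DegLe n →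
        ∀ lam : Λ.Mor, Λ.r lam = w → Λ.s lam ≠ x.vert n}) ≠ Set.univ ∧
    Λ.Hereditary {w : Λ.Obj | ∀ n : Fin k → ℕ, x.DegLe n →
        ∀ lam : Λ.Mor, Λ.r lam = w → Λ.s lam ≠ x.vert n} :=
  ⟨⟨v, hv⟩, x.unreachingVertices_ne_univ, x.hereditary_unreachingVertices⟩

theorem stmt19 {k : ℕ} (Λ : KGraph k) (hFA : Λ.FinitelyAligned)
    (v : Λ.Obj) (x : KPath Λ) (hx : x.IsBoundary)
    (hv : ∀ n : Fin k → ℕ, x.DegLe n →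
      ∀ lam : Λ.Mor, Λ.r lam = v → Λ.s lam ≠ x.vert n) :
    ({w : Λ.Obj | ∀ n : Fin k → ℕ, x.DegLe n →
        ∀ lam : Λ.Mor, Λ.r lam = w → Λ.s lam ≠ x.vert n}).Nonempty ∧
    ({w : Λ.Obj | ∀ n : Fin k → ℕ, x.DegLe n →
        ∀ lam : Λ.Mor, Λ.r lam = w → Λ.s lam ≠ x.vert n}) ≠ Set.univ ∧
    Λ.Hereditary {w : Λ.Obj | ∀ n : Fin k → ℕ, x.DegLe n →
        ∀ lam : Λ.Mor, Λ.r lam = w → Λ.s lam ≠ x.vert n} :=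
  stmt19_general Λ v x hv
end
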